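/- arXiv:2201.11003 — 6 statements merged into one kernel-verified Lean document; each statement's English description precedes it below -/
import Mathlib

section
/- Let S ⊆ ℝ^n be a convex set, let f : ℝ^n → ℝ be convex, and let g_1, …, g_m : ℝ^n → ℝ be convex. Suppose x* ∈ S satisfies g_j(x*) ≤ 0 for all j, and there exist Lagrange multipliers η_1, …, η_m ≥ 0 with η_j · g_j(x*) = 0 for all j such that x* minimizes x ↦ f(x) + Σ_{j=1}^m η_j g_j(x) over S. If p > max{η_1, …, η_m}, then every minimizer x̂ of the penalized function x ↦ f(x) + p Σ_{j=1}^m max(g_j(x), 0) over S satisfies g_j(x̂) ≤ 0 for all j and minimizes f over the set {x ∈ S : g_j(x) ≤ 0 for all j}. -/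
/-!
Since `x⋆` is feasible and complementary, the penalized objective `P` and the Lagrangian `L` both
equal `f x⋆` at `x⋆`. Hence `P x̂ ≤ P x⋆ = L x⋆ ≤ L x̂`. Termwise `η_j g_j ≤ p [g_j]⁺`, strictly
where `g_j > 0` because `η_j < p`; so `L x̂ ≤ P x̂`, and equality forces `x̂` to be feasible. On the
feasible set `P = f`, so `x̂` minimizes `f` there.
-/

open Finset

section PositivePart

variable {ι : Type*} [Fintype ι] {η t : ι → ℝ} {p : ℝ}

theorem mul_le_mul_max_zero {a b s : ℝ} (ha : 0 ≤ a) (hab : a ≤ b) : a * s ≤ b * max s 0 := by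
  rcases le_or_gt s 0 with hs | hs
  · rw [max_eq_right hs]
    nlinarith
  · rw [max_eq_left hs.le]
    nlinarith

theorem mul_lt_mul_max_zero {a b s : ℝ} (hab : a < b) (hs : 0 < s) : a * s < b * max s 0 := by
  rw [max_eq_left hs.le]
  nlinarith

theorem sum_max_zero_eq_zero (ht : ∀ j, t j ≤ 0) : ∑ j, max (t j) 0 = 0 :=
  sum_eq_zero fun j _ => max_eq_right (ht j)

theorem nonpos_of_mul_sum_max_zero_le_sum_mul (hη : ∀ j, 0 ≤ η j) (hp : ∀ j, η j < p)
    (hle : p * ∑ j, max (t j) 0 ≤ ∑ j, η j * t j) (j : ι) : t j ≤ 0 := by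
  by_contra! hpos
  have hlt : ∑ j, η j * t j < p * ∑ j, max (t j) 0 := by
    rw [mul_sum]
    exact sum_lt_sum (fun i _ => mul_le_mul_max_zero (hη i) (hp i).le)
      ⟨j, mem_univ j, mul_lt_mul_max_zero (hp j) hpos⟩
  linarith

end PositivePart

theorem exact_penalty_general {n m : ℕ}
    (S : Set (Fin n → ℝ))
    (f : (Fin n → ℝ) → ℝ)
    (g : Fin m → (Fin n → ℝ) → ℝ)
    (xstar : Fin n → ℝ) (hxS : xstar ∈ S) (hxfeas : ∀ j, g j xstar ≤ 0)
    (η : Fin m → ℝ) (hη : ∀ j, 0 ≤ η j)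
    (hcomp : ∀ j, η j * g j xstar = 0)
    (hLagMin : ∀ x ∈ S,
      f xstar + ∑ j, η j * g j xstar ≤ f x + ∑ j, η j * g j x)
    (p : ℝ) (hp : ∀ j, η j < p)
    (xhat : Fin n → ℝ) (hxhatS : xhat ∈ S)
    (hxhatMin : ∀ x ∈ S,
      f xhat + p * ∑ j, max (g j xhat) 0 ≤ f x + p * ∑ j, max (g j x) 0) :
    (∀ j, g j xhat ≤ 0) ∧ ∀ x ∈ S, (∀ j, g j x ≤ 0) → f xhat ≤ f x := by
  have hPenalty : f xhat + p * ∑ j, max (g j xhat) 0 ≤ f xstar := by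
    simpa [sum_max_zero_eq_zero hxfeas] using hxhatMin xstar hxS
  have hLagrangian : f xstar ≤ f xhat + ∑ j, η j * g j xhat := by
    simpa [hcomp] using hLagMin xhat hxhatS
  have hfeas : ∀ j, g j xhat ≤ 0 :=
    nonpos_of_mul_sum_max_zero_le_sum_mul hη hp (by linarith)
  refine ⟨hfeas, fun x hx hxfeas' => ?_⟩
  simpa [sum_max_zero_eq_zero hfeas, sum_max_zero_eq_zero hxfeas'] using hxhatMin x hx

/-- Exact penalty method (Lemma 1): if `p` exceeds every Lagrange multiplier of the
inequality constraints, then every minimizer of the penalized problem over `S` is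
feasible and minimizes `f` over the feasible set. -/
theorem exact_penalty {n m : ℕ} (hm : 0 < m)
    (S : Set (Fin n → ℝ)) (hS : Convex ℝ S)
    (f : (Fin n → ℝ) → ℝ) (hf : ConvexOn ℝ S f)
    (g : Fin m → (Fin n → ℝ) → ℝ) (hg : ∀ j, ConvexOn ℝ S (g j))
    (xstar : Fin n → ℝ) (hxS : xstar ∈ S) (hxfeas : ∀ j, g j xstar ≤ 0)
    (η : Fin m → ℝ) (hη : ∀ j, 0 ≤ η j)
    (hcomp : ∀ j, η j * g j xstar = 0)
    (hLagMin : ∀ x ∈ S,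
      f xstar + ∑ j, η j * g j xstar ≤ f x + ∑ j, η j * g j x)
    (p : ℝ) (hp : ∀ j, η j < p)
    (xhat : Fin n → ℝ) (hxhatS : xhat ∈ S)
    (hxhatMin : ∀ x ∈ S,
      f xhat + p * ∑ j, max (g j xhat) 0 ≤ f x + p * ∑ j, max (g j x) 0) :
    (∀ j, g j xhat ≤ 0) ∧ ∀ x ∈ S, (∀ j, g j x ≤ 0) → f xhat ≤ f x :=
  exact_penalty_general S f g xstar hxS hxfeas η hη hcomp hLagMin p hp xhat hxhatS hxhatMin
end

section
/- Let N ≥ 1, m > 0, and let F : ℝ^N → ℝ^N be m-strongly monotone, i.e., (x−y)ᵀ(F(x)−F(y)) ≥ m‖x−y‖² for all x, y ∈ ℝ^N. For each i ∈ {1,…,N} let p_i ≥ 0 and let g_{i1}, …, g_{i m_i} : ℝ → ℝ be convex and differentiable, and define s_{ij}(t) = g_{ij}'(t) if g_{ij}(t) > 0 and s_{ij}(t) = 0 otherwise. Then the map F̂ : ℝ^N → ℝ^N with components F̂_i(x) = F_i(x) + p_i Σ_{j=1}^{m_i} s_{ij}(x_i) is also m-strongly monotone. -/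
/-!
Each penalty term `s_{ij}` is monotone: convexity makes `g_{ij}'` monotone, and on an
interval where `g_{ij}` changes sign the chord slope lies between `0` and the derivative
on the positive side. So the penalty part of `F̂` is a separable map with monotone
coordinates, hence monotone, and adding it to `F` can only increase `⟪x - y, F x - F y⟫`.
-/

open scoped RealInnerProductSpace

lemma ConvexOn.monotone_ite_pos_deriv {f : ℝ → ℝ} (hconv : ConvexOn ℝ Set.univ f)
    (hdiff : Differentiable ℝ f) :
    Monotone (fun t => if 0 < f t then deriv f t else 0) := by
  intro a b hab
  rcases hab.eq_or_lt with rfl | hlt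
  · exact le_rfl
  have hslope : slope f a b = (f b - f a) / (b - a) := slope_def_field f a b
  have hba : 0 < b - a := sub_pos.mpr hlt
  dsimp only
  split_ifs with ha hb hb
  · exact hconv.monotoneOn_deriv (fun x _ => hdiff x) trivial trivial hab
  · have hle : deriv f a ≤ slope f a b := hconv.deriv_le_slope trivial trivial hlt (hdiff a)
    have hnonpos : slope f a b ≤ 0 := by
      rw [hslope]
      exact div_nonpos_of_nonpos_of_nonneg (by linarith) hba.le
    linarith
  · have hle : slope f a b ≤ deriv f b := hconv.slope_le_deriv trivial trivial hlt (hdiff b)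
    have hnonneg : 0 ≤ slope f a b := by
      rw [hslope]
      exact div_nonneg (by linarith) hba.le
    linarith
  · exact le_rfl

lemma Monotone.sub_mul_sub_nonneg {f : ℝ → ℝ} (hf : Monotone f) (a b : ℝ) :
    0 ≤ (a - b) * (f a - f b) := by
  rcases le_total b a with h | h
  · exact mul_nonneg (sub_nonneg.mpr h) (sub_nonneg.mpr (hf h))
  · exact mul_nonneg_of_nonpos_of_nonpos (sub_nonpos.mpr h) (sub_nonpos.mpr (hf h))

lemma inner_sub_nonneg_of_monotone_coord {ι : Type*} [Fintype ι]
    {G : EuclideanSpace ℝ ι → EuclideanSpace ℝ ι} {φ : ι → ℝ → ℝ} (hφ : ∀ i, Monotone (φ i))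
    (hG : ∀ x i, G x i = φ i (x i)) (x y : EuclideanSpace ℝ ι) :
    0 ≤ ⟪x - y, G x - G y⟫ := by
  rw [PiLp.inner_apply]
  refine Finset.sum_nonneg fun i _ => ?_
  simp only [PiLp.sub_apply, hG, RCLike.inner_apply, conj_trivial, mul_comm (φ i (x i) - _)]
  exact (hφ i).sub_mul_sub_nonneg (x i) (y i)

theorem penalized_pseudogradient_strongly_monotone_general {N : ℕ}
    (m : ℝ)
    (F : EuclideanSpace ℝ (Fin N) → EuclideanSpace ℝ (Fin N))
    (hF : ∀ x y : EuclideanSpace ℝ (Fin N), m * ‖x - y‖ ^ 2 ≤ ⟪x - y, F x - F y⟫)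
    (mi : Fin N → ℕ) (p : Fin N → ℝ) (hp : ∀ i, 0 ≤ p i)
    (g : (i : Fin N) → Fin (mi i) → ℝ → ℝ)
    (hgconv : ∀ i j, ConvexOn ℝ Set.univ (g i j))
    (hgdiff : ∀ i j, Differentiable ℝ (g i j))
    (s : (i : Fin N) → Fin (mi i) → ℝ → ℝ)
    (hs : ∀ i j t, s i j t = if 0 < g i j t then deriv (g i j) t else 0)
    (Fhat : EuclideanSpace ℝ (Fin N) → EuclideanSpace ℝ (Fin N))
    (hFhat : ∀ (x : EuclideanSpace ℝ (Fin N)) (i : Fin N),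
      Fhat x i = F x i + p i * ∑ j, s i j (x i)) :
    ∀ x y : EuclideanSpace ℝ (Fin N), m * ‖x - y‖ ^ 2 ≤ ⟪x - y, Fhat x - Fhat y⟫ := by
  intro x y
  have hs_mono : ∀ i j, Monotone (s i j) := fun i j => by
    simpa only [← funext (hs i j)] using (hgconv i j).monotone_ite_pos_deriv (hgdiff i j)
  have hpenalty_mono : ∀ i, Monotone fun t => p i * ∑ j, s i j t := fun i =>
    (Monotone.finsetSum fun j _ => hs_mono i j).const_mul (hp i)
  have hpenalty : 0 ≤ ⟪x - y, (Fhat - F) x - (Fhat - F) y⟫ :=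
    inner_sub_nonneg_of_monotone_coord hpenalty_mono
      (fun z i => by rw [Pi.sub_apply, PiLp.sub_apply, hFhat]; ring) x y
  have hsplit : Fhat x - Fhat y = (F x - F y) + ((Fhat - F) x - (Fhat - F) y) := by
    simp only [Pi.sub_apply]; abel
  rw [hsplit, inner_add_right]
  linarith [hF x y]

/-- Adding the exact-penalty terms preserves `m`-strong monotonicity of the
pseudo-gradient. -/
theorem penalized_pseudogradient_strongly_monotone {N : ℕ} (hN : 1 ≤ N)
    (m : ℝ) (hm : 0 < m)
    (F : EuclideanSpace ℝ (Fin N) → EuclideanSpace ℝ (Fin N))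
    (hF : ∀ x y : EuclideanSpace ℝ (Fin N), m * ‖x - y‖ ^ 2 ≤ ⟪x - y, F x - F y⟫)
    (mi : Fin N → ℕ) (p : Fin N → ℝ) (hp : ∀ i, 0 ≤ p i)
    (g : (i : Fin N) → Fin (mi i) → ℝ → ℝ)
    (hgconv : ∀ i j, ConvexOn ℝ Set.univ (g i j))
    (hgdiff : ∀ i j, Differentiable ℝ (g i j))
    (s : (i : Fin N) → Fin (mi i) → ℝ → ℝ)
    (hs : ∀ i j t, s i j t = if 0 < g i j t then deriv (g i j) t else 0)
    (Fhat : EuclideanSpace ℝ (Fin N) → EuclideanSpace ℝ (Fin N))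
    (hFhat : ∀ (x : EuclideanSpace ℝ (Fin N)) (i : Fin N),
      Fhat x i = F x i + p i * ∑ j, s i j (x i)) :
    ∀ x y : EuclideanSpace ℝ (Fin N), m * ‖x - y‖ ^ 2 ≤ ⟪x - y, Fhat x - Fhat y⟫ :=
  penalized_pseudogradient_strongly_monotone_general m F hF mi p hp g hgconv hgdiff s hs Fhat hFhat
end

section
/- Let N ≥ 1, m > 0, let F : ℝ^N → ℝ^N be continuous and m-strongly monotone, i.e., (x−y)ᵀ(F(x)−F(y)) ≥ m‖x−y‖² for all x, y ∈ ℝ^N, and let d ∈ ℝ^N. Then there exists exactly one pair (x*, μ̄) ∈ ℝ^N × ℝ such that F(x*) + μ̄·𝟏_N = 0 and Σ_{i=1}^N x*_i = Σ_{i=1}^N d_i, where 𝟏_N is the all-ones vector. -/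
open scoped RealInnerProductSpace

theorem exists_zero_of_strongly_monotone (m : ℝ) (hm : 0 < m) :
    ∀ (n : ℕ) (F : (Fin n → ℝ) → (Fin n → ℝ)), Continuous F →
      (∀ x y, m * ∑ i, (x i - y i) ^ 2 ≤ ∑ i, (x i - y i) * (F x i - F y i)) →
      ∃ x, ∀ i, F x i = 0 := by
  intro n
  induction n with
  | zero => exact fun F _ _ => ⟨fun i => 0, fun i => i.elim0⟩
  | succ n ih =>
    intro F hc hmono
    have hsnoc : Continuous (fun p : (Fin n → ℝ) × ℝ =>
        (Fin.snoc p.1 p.2 : Fin (n+1) → ℝ)) := by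
      apply continuous_pi; intro i
      refine Fin.lastCases ?_ ?_ i
      · simpa using continuous_snd
      · intro j; simpa using (show Continuous fun p : (Fin n → ℝ) × ℝ => p.1 j from (continuous_apply j).comp continuous_fst)
    set g : (Fin n → ℝ) → ℝ → ℝ := fun x' t => F (Fin.snoc x' t) (Fin.last n) with hg_def
    have hgc : ∀ x', Continuous (g x') := by
      intro x'
      exact (continuous_apply _).comp (hc.comp (hsnoc.comp
        (continuous_const.prodMk continuous_id)))
    have h1 : ∀ x' s t, m * (t - s) ^ 2 ≤ (t - s) * (g x' t - g x' s) := by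
      intro x' s t
      have h := hmono (Fin.snoc x' t) (Fin.snoc x' s)
      rw [Fin.sum_univ_castSucc, Fin.sum_univ_castSucc] at h
      simpa using h
    -- existence of root
    have hg : ∀ x', ∃ t, g x' t = 0 := by
      intro x'
      set b : ℝ := (|g x' 0| + 1) / m with hb_def
      have hb : 0 < b := by positivity
      have hmb : m * b = |g x' 0| + 1 := by rw [hb_def]; field_simp
      have hgb : 0 < g x' b := by
        have h := h1 x' 0 b
        have h2 : -|g x' 0| ≤ g x' 0 := neg_abs_le _
        have h' : m * b * b ≤ (g x' b - g x' 0) * b := by nlinarith [h]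
        have h'' : m * b ≤ g x' b - g x' 0 := le_of_mul_le_mul_right h' hb
        linarith
      have hga : g x' (-b) < 0 := by
        have h := h1 x' (-b) 0
        have h2 : g x' 0 ≤ |g x' 0| := le_abs_self _
        have h' : m * b * b ≤ (g x' 0 - g x' (-b)) * b := by nlinarith [h]
        have h'' : m * b ≤ g x' 0 - g x' (-b) := le_of_mul_le_mul_right h' hb
        linarith
      have hmem : (0:ℝ) ∈ Set.Icc (g x' (-b)) (g x' b) := ⟨hga.le, hgb.le⟩
      have := intermediate_value_Icc (by linarith : (-b:ℝ) ≤ b) ((hgc x').continuousOn)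
      obtain ⟨t, _, ht⟩ := this hmem
      exact ⟨t, ht⟩
    set φ : (Fin n → ℝ) → ℝ := fun x' => (hg x').choose with hφ_def
    have hφ : ∀ x', g x' (φ x') = 0 := fun x' => (hg x').choose_spec
    have hbound : ∀ x' y', m * |φ y' - φ x'| ≤ |g y' (φ x')| := by
      intro x' y'
      have h := h1 y' (φ x') (φ y')
      rw [hφ y'] at h
      rcases eq_or_ne (φ y') (φ x') with h0 | h0
      · simp [h0, abs_nonneg]
      · have habs : 0 < |φ y' - φ x'| := abs_pos.2 (sub_ne_zero.2 h0)
        have hkey : m * (φ y' - φ x') ^ 2 ≤ |φ y' - φ x'| * |g y' (φ x')| := by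
          calc m * (φ y' - φ x') ^ 2 ≤ (φ y' - φ x') * (0 - g y' (φ x')) := h
            _ ≤ |(φ y' - φ x') * (0 - g y' (φ x'))| := le_abs_self _
            _ = |φ y' - φ x'| * |g y' (φ x')| := by rw [abs_mul]; simp
        nlinarith [sq_abs (φ y' - φ x')]
    have hφc : Continuous φ := by
      rw [continuous_iff_continuousAt]
      intro x'
      have hgy : Continuous (fun y' => |g y' (φ x')| / m) := by
        exact (((continuous_apply _).comp (hc.comp (hsnoc.comp
          (continuous_id.prodMk continuous_const)))).abs).div_const m
      have h2 : Filter.Tendsto (fun y' => |φ y' - φ x'|) (nhds x') (nhds 0) := by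
        refine squeeze_zero (g := fun y' => |g y' (φ x')| / m)
          (fun y' => abs_nonneg _) (fun y' => ?_) ?_
        · rw [le_div_iff₀ hm]
          have := hbound x' y'
          linarith
        · have := hgy.tendsto x'
          simpa [hφ x'] using this
      rw [ContinuousAt, tendsto_iff_dist_tendsto_zero]
      simpa [Real.dist_eq] using h2
    set G : (Fin n → ℝ) → (Fin n → ℝ) :=
      fun x' i => F (Fin.snoc x' (φ x')) i.castSucc with hG_def
    have hGc : Continuous G := by
      apply continuous_pi; intro i
      exact (continuous_apply _).comp (hc.comp (hsnoc.comp
        (continuous_id.prodMk hφc)))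
    have hGm : ∀ x' y', m * ∑ i, (x' i - y' i) ^ 2 ≤
        ∑ i, (x' i - y' i) * (G x' i - G y' i) := by
      intro x' y'
      have h := hmono (Fin.snoc x' (φ x')) (Fin.snoc y' (φ y'))
      rw [Fin.sum_univ_castSucc, Fin.sum_univ_castSucc] at h
      have e1 : F (Fin.snoc x' (φ x')) (Fin.last n) = 0 := hφ x'
      have e2 : F (Fin.snoc y' (φ y')) (Fin.last n) = 0 := hφ y'
      simp only [Fin.snoc_castSucc, Fin.snoc_last, e1, e2] at h
      have hnn : 0 ≤ m * (φ x' - φ y') ^ 2 := by positivity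
      simp only [hG_def]
      nlinarith
    obtain ⟨x', hx'⟩ := ih G hGc hGm
    refine ⟨Fin.snoc x' (φ x'), fun i => ?_⟩
    refine Fin.lastCases ?_ ?_ i
    · exact hφ x'
    · intro j; exact hx' j

/-- Lemma 2: for a continuous `m`-strongly monotone pseudo-gradient `F` and demand
vector `d`, there is a unique pair `(x*, μ̄)` satisfying the KKT system
`F(x*) + μ̄·𝟏 = 0` and `∑ᵢ x*ᵢ = ∑ᵢ dᵢ`. -/
theorem unique_GNE_and_multiplier {N : ℕ} (hN : 1 ≤ N) (m : ℝ) (hm : 0 < m)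
    (F : EuclideanSpace ℝ (Fin N) → EuclideanSpace ℝ (Fin N))
    (hFcont : Continuous F)
    (hF : ∀ x y : EuclideanSpace ℝ (Fin N), m * ‖x - y‖ ^ 2 ≤ ⟪x - y, F x - F y⟫)
    (d : Fin N → ℝ) :
    ∃! q : EuclideanSpace ℝ (Fin N) × ℝ,
      (∀ i, F q.1 i + q.2 = 0) ∧ ∑ i, q.1 i = ∑ i, d i := by
  -- reformulate inner-product hypothesis coordinatewise
  have hinner : ∀ x y : EuclideanSpace ℝ (Fin N),
      ⟪x - y, F x - F y⟫ = ∑ i, (x i - y i) * (F x i - F y i) := by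
    intro x y
    simp [PiLp.inner_apply, RCLike.inner_apply, PiLp.sub_apply]
    exact Finset.sum_congr rfl fun i _ => mul_comm _ _
  have hnorm : ∀ x y : EuclideanSpace ℝ (Fin N),
      ‖x - y‖ ^ 2 = ∑ i, (x i - y i) ^ 2 := by
    intro x y
    rw [EuclideanSpace.norm_eq, Real.sq_sqrt (Finset.sum_nonneg fun i _ => sq_nonneg _)]
    simp [PiLp.sub_apply]
  have hmono : ∀ x y : EuclideanSpace ℝ (Fin N),
      m * ∑ i, (x i - y i) ^ 2 ≤ ∑ i, (x i - y i) * (F x i - F y i) := by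
    intro x y
    have := hF x y
    rwa [hnorm, hinner] at this
  -- continuity as a map of plain pi types
  have hFp : Continuous (fun x : Fin N → ℝ => (F (WithLp.toLp 2 x) : Fin N → ℝ)) := by
    exact (EuclideanSpace.equiv (Fin N) ℝ).continuous.comp
      (hFcont.comp (EuclideanSpace.equiv (Fin N) ℝ).symm.continuous)
  obtain ⟨n, rfl⟩ : ∃ n, N = n + 1 := ⟨N - 1, (Nat.succ_pred_eq_of_pos hN).symm⟩
  set c : ℝ := ∑ i, d i with hc_def
  set ψ : (Fin n → ℝ) → EuclideanSpace ℝ (Fin (n+1)) :=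
    fun y => WithLp.toLp 2 (Fin.snoc y (c - ∑ i, y i)) with hψ_def
  have hψsum : ∀ y, ∑ i, ψ y i = c := by
    intro y
    rw [Fin.sum_univ_castSucc]
    simp [hψ_def]
  have hψc : Continuous ψ := by
    have hsnoc : Continuous (fun p : (Fin n → ℝ) × ℝ =>
        (Fin.snoc p.1 p.2 : Fin (n+1) → ℝ)) := by
      apply continuous_pi; intro i
      refine Fin.lastCases ?_ ?_ i
      · simpa using continuous_snd
      · intro j; simpa using (show Continuous fun p : (Fin n → ℝ) × ℝ => p.1 j from (continuous_apply j).comp continuous_fst)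
    exact (PiLp.continuous_toLp 2 _).comp <| hsnoc.comp (continuous_id.prodMk
      (continuous_const.sub (continuous_finset_sum _ fun i _ => continuous_apply i)))
  set G : (Fin n → ℝ) → (Fin n → ℝ) :=
    fun y i => F (ψ y) i.castSucc - F (ψ y) (Fin.last n) with hG_def
  have hGc : Continuous G := by
    apply continuous_pi; intro i
    exact ((continuous_apply _).comp ((PiLp.continuous_ofLp 2 _).comp (hFcont.comp hψc))).sub
      ((continuous_apply _).comp ((PiLp.continuous_ofLp 2 _).comp (hFcont.comp hψc)))
  have hGm : ∀ y z, m * ∑ i, (y i - z i) ^ 2 ≤ ∑ i, (y i - z i) * (G y i - G z i) := by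
    intro y z
    have h := hmono (ψ y) (ψ z)
    rw [Fin.sum_univ_castSucc, Fin.sum_univ_castSucc] at h
    simp only [hψ_def, PiLp.toLp_apply, Fin.snoc_castSucc, Fin.snoc_last] at h
    have key : ∑ i, (y i - z i) * (G y i - G z i)
        = (∑ i, (y i - z i) * (F (ψ y) i.castSucc - F (ψ z) i.castSucc))
          - ((∑ i, y i) - ∑ i, z i) * (F (ψ y) (Fin.last n) - F (ψ z) (Fin.last n)) := by
      calc ∑ i, (y i - z i) * (G y i - G z i)
          = ∑ i, ((y i - z i) * (F (ψ y) i.castSucc - F (ψ z) i.castSucc)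
              - (y i - z i) * (F (ψ y) (Fin.last n) - F (ψ z) (Fin.last n))) := by
            refine Finset.sum_congr rfl fun i _ => ?_
            simp only [hG_def]
            ring
        _ = (∑ i, (y i - z i) * (F (ψ y) i.castSucc - F (ψ z) i.castSucc))
              - (∑ i, (y i - z i)) * (F (ψ y) (Fin.last n) - F (ψ z) (Fin.last n)) := by
            rw [Finset.sum_sub_distrib, Finset.sum_mul]
        _ = _ := by rw [Finset.sum_sub_distrib]
    rw [key]
    simp only [hψ_def]
    have hsq : 0 ≤ m * ((c - ∑ i, y i) - (c - ∑ i, z i)) ^ 2 := by positivity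
    nlinarith [h, hsq]
  obtain ⟨y0, hy0⟩ := exists_zero_of_strongly_monotone m hm n G hGc hGm
  set xs : EuclideanSpace ℝ (Fin (n+1)) := ψ y0 with hxs_def
  set μ : ℝ := -F xs (Fin.last n) with hμ_def
  refine ⟨(xs, μ), ⟨?_, ?_⟩, ?_⟩
  · intro i
    refine Fin.lastCases ?_ ?_ i
    · simp [hμ_def]
    · intro j
      have := hy0 j
      simp only [hG_def] at this
      rw [← hxs_def] at this
      simp only [hμ_def]
      linarith
  · simpa [hxs_def] using hψsum y0
  · rintro ⟨y, ν⟩ ⟨hy1, hy2⟩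
    have hx1 : ∀ i, F (xs) i + μ = 0 := by
      intro i
      refine Fin.lastCases ?_ ?_ i
      · simp [hμ_def]
      · intro j
        have := hy0 j
        simp only [hG_def] at this
        rw [← hxs_def] at this
        simp only [hμ_def]
        linarith
    have hFy : ∀ i, F y i = -ν := fun i => by linarith [hy1 i]
    have hFx : ∀ i, F (xs) i = -μ := fun i => by linarith [hx1 i]
    have hzero : ⟪y - xs, F y - F (xs)⟫ = 0 := by
      rw [hinner]
      calc ∑ i, (y i - xs i) * (F y i - F (xs) i)
          = ∑ i, (y i - xs i) * (μ - ν) :=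
            Finset.sum_congr rfl fun i _ => by rw [hFy i, hFx i]; ring
        _ = (∑ i, (y i - xs i)) * (μ - ν) := by rw [Finset.sum_mul]
        _ = 0 := by
            rw [Finset.sum_sub_distrib, hy2]
            have := hψsum y0
            rw [← hxs_def] at this
            rw [this]
            ring
    have h3 := hF y (xs)
    rw [hzero] at h3
    have h4 : ‖y - xs‖ ^ 2 ≤ 0 := le_of_mul_le_mul_left (by simpa using h3) hm
    have hnn : ‖y - xs‖ = 0 := by
      have h5 : ‖y - xs‖ ^ 2 = 0 := le_antisymm h4 (sq_nonneg _)
      exact pow_eq_zero_iff two_ne_zero |>.mp h5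
    have h0 : y = xs := sub_eq_zero.mp (norm_eq_zero.mp hnn)
    have i0 : Fin (n+1) := ⟨0, hN⟩
    have hν : ν = μ := by
      have ha := hy1 i0
      have hb := hx1 i0
      rw [h0] at ha
      linarith
    exact Prod.ext h0 hν
end

section
/- Let N ≥ 1 and let m, K̲, φ, α, λ₂ be positive reals. Let x̃, μ̃, z̃, ñ ∈ ℝ^N and F̃ ∈ ℝ^N satisfy ⟨x̃, F̃⟩ ≥ m‖x̃‖², and let L ∈ ℝ^{N×N} be symmetric with ⟨μ̃, L μ̃⟩ ≥ λ₂‖μ̃‖². Then −φ K̲ ⟨x̃, F̃ + μ̃⟩ + ⟨μ̃, x̃ − α L μ̃ − z̃⟩ + ⟨μ̃ + z̃, x̃ − z̃⟩ − ‖ñ‖² ≤ −(φ K̲ m − K̲/2 − 1/2)‖x̃‖² − (α λ₂ − φ² K̲/2 − 2)‖μ̃‖² − (1/2)‖z̃‖² − ‖ñ‖². -/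
open scoped RealInnerProductSpace

/-!
Expand the inner products and bound the two indefinite cross terms by Young's inequality:
`-φK⟪x̃, μ̃⟫ ≤ (K/2)(‖x̃‖² + φ²‖μ̃‖²)`, and, in the coupling of `μ̃` with `x̃ - z̃`,
`2⟪μ̃, x̃ - z̃⟫ ≤ 2‖μ̃‖² + ‖x̃ - z̃‖²/2`. The leftover `⟪z̃, x̃ - z̃⟫ + ‖x̃ - z̃‖²/2` equals
`(‖x̃‖² - ‖z̃‖²)/2`, and the terms `⟪x̃, F̃⟫`, `⟪μ̃, Lμ̃⟫` are controlled by strong monotonicity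
and the algebraic connectivity.
-/

section RealInnerProductSpace

variable {E : Type*} [NormedAddCommGroup E] [InnerProductSpace ℝ E]

theorem two_mul_real_inner_le_norm_sq_add_norm_sq (x y : E) :
    2 * ⟪x, y⟫ ≤ ‖x‖ ^ 2 + ‖y‖ ^ 2 := by
  have := norm_sub_sq_real x y
  linarith [sq_nonneg ‖x - y‖]

theorem neg_mul_real_inner_le (c : ℝ) (x y : E) :
    -c * ⟪x, y⟫ ≤ (‖x‖ ^ 2 + c ^ 2 * ‖y‖ ^ 2) / 2 := by
  have h := two_mul_real_inner_le_norm_sq_add_norm_sq x (-c • y)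
  rw [inner_smul_right, norm_smul, Real.norm_eq_abs, mul_pow, sq_abs] at h
  linarith

theorem real_inner_add_real_inner_sub_le (μ x z : E) :
    ⟪μ, x - z⟫ + ⟪μ + z, x - z⟫ ≤ 2 * ‖μ‖ ^ 2 + ‖x‖ ^ 2 / 2 - ‖z‖ ^ 2 / 2 := by
  have young := two_mul_real_inner_le_norm_sq_add_norm_sq ((2 : ℝ) • μ) (x - z)
  rw [real_inner_smul_left, norm_smul, mul_pow, Real.norm_two] at young
  have hxz := norm_sub_sq_real x z
  rw [inner_add_left, inner_sub_right z, real_inner_self_eq_norm_sq, real_inner_comm x z]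
  linarith

end RealInnerProductSpace

/-- `xv, muv, zv, nv, Fv` are `x̃, μ̃, z̃, ñ, F̃`, `Lmu` is `Lμ̃`, `K` is `K̲` and `lam₂` is `λ₂`. -/
theorem lyapunov_estimate_thm1_general {N : ℕ}
    (m K φ α lam₂ : ℝ) (hK : 0 < K) (hφ : 0 < φ) (hα : 0 < α)
    (xv muv zv nv Fv : EuclideanSpace ℝ (Fin N))
    (Lmu : EuclideanSpace ℝ (Fin N))
    (hmono : m * ‖xv‖ ^ 2 ≤ ⟪xv, Fv⟫)
    (hL : lam₂ * ‖muv‖ ^ 2 ≤ ⟪muv, Lmu⟫) :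
    -(φ * K) * ⟪xv, Fv + muv⟫
        + ⟪muv, xv - α • Lmu - zv⟫
        + ⟪muv + zv, xv - zv⟫ - ‖nv‖ ^ 2 ≤
      -(φ * K * m - K / 2 - 1 / 2) * ‖xv‖ ^ 2
        - (α * lam₂ - φ ^ 2 * K / 2 - 2) * ‖muv‖ ^ 2
        - (1 / 2) * ‖zv‖ ^ 2 - ‖nv‖ ^ 2 := by
  have hF : φ * K * (m * ‖xv‖ ^ 2) ≤ φ * K * ⟪xv, Fv⟫ :=
    mul_le_mul_of_nonneg_left hmono (by positivity)
  have hLap : α * (lam₂ * ‖muv‖ ^ 2) ≤ α * ⟪muv, Lmu⟫ := mul_le_mul_of_nonneg_left hL hα.le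
  have hcross : K * (-φ * ⟪xv, muv⟫) ≤ K * ((‖xv‖ ^ 2 + φ ^ 2 * ‖muv‖ ^ 2) / 2) :=
    mul_le_mul_of_nonneg_left (neg_mul_real_inner_le φ xv muv) hK.le
  have hcoupling := real_inner_add_real_inner_sub_le muv xv zv
  have hsplit : ⟪muv, xv - α • Lmu - zv⟫ = ⟪muv, xv - zv⟫ - α * ⟪muv, Lmu⟫ := by
    rw [sub_right_comm, inner_sub_right, real_inner_smul_right]
  rw [inner_add_right, hsplit]
  linarith

/-- Key Lyapunov-derivative estimate in the proof of Theorem 1 (lam₂ is the algebraic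
connectivity λ₂ of the communication graph, K the minimal gain K̲; xv = x̃, muv = μ̃,
zv = z̃, nv = ñ, Fv = F̃ = F(x̂ᵃ) − F(x*); `L.mulVec` viewed in Euclidean space). -/
theorem lyapunov_estimate_thm1 {N : ℕ} (hN : 1 ≤ N)
    (m K φ α lam₂ : ℝ) (hm : 0 < m) (hK : 0 < K) (hφ : 0 < φ) (hα : 0 < α)
    (hlam₂ : 0 < lam₂)
    (xv muv zv nv Fv : EuclideanSpace ℝ (Fin N))
    (L : Matrix (Fin N) (Fin N) ℝ) (hLsymm : L.IsSymm)
    (Lmu : EuclideanSpace ℝ (Fin N)) (hLmu : ∀ i, Lmu i = L.mulVec muv i)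
    (hmono : m * ‖xv‖ ^ 2 ≤ ⟪xv, Fv⟫)
    (hL : lam₂ * ‖muv‖ ^ 2 ≤ ⟪muv, Lmu⟫) :
    -(φ * K) * ⟪xv, Fv + muv⟫
        + ⟪muv, xv - α • Lmu - zv⟫
        + ⟪muv + zv, xv - zv⟫ - ‖nv‖ ^ 2 ≤
      -(φ * K * m - K / 2 - 1 / 2) * ‖xv‖ ^ 2
        - (α * lam₂ - φ ^ 2 * K / 2 - 2) * ‖muv‖ ^ 2
        - (1 / 2) * ‖zv‖ ^ 2 - ‖nv‖ ^ 2 :=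
  lyapunov_estimate_thm1_general m K φ α lam₂ hK hφ hα xv muv zv nv Fv Lmu hmono hL
end

section
/- Let N ≥ 1 and α, λ₂, q̲ > 0. Let A, P, Q, k, L ∈ ℝ^{N×N} with P, Q, L symmetric, AᵀP + PA = −Q, x̃ᵀQx̃ ≥ q̲‖x̃‖² for all x̃ ∈ ℝ^N, and μ̃ᵀLμ̃ ≥ λ₂‖μ̃‖² for all μ̃ under consideration. Let c = ‖kᵀP‖ be the spectral norm of kᵀP. Then for all x̃, μ̃, z̃, ñ ∈ ℝ^N, x̃ᵀ(AᵀP+PA)x̃ − 2μ̃ᵀkᵀP x̃ + ⟨μ̃, x̃ − αLμ̃ − z̃⟩ + ⟨μ̃ + z̃, x̃ − z̃⟩ − ‖ñ‖² ≤ −(q̲ − 1/2 − c)‖x̃‖² − (αλ₂ − 2 − c)‖μ̃‖² − (1/2)‖z̃‖² − ‖ñ‖². -/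
open scoped RealInnerProductSpace Matrix

/-!
Each term of the Lyapunov derivative is bounded separately: the Lyapunov equation and the
bound on `Q` handle the `x̃`-term, the bound on `L` the consensus term, Cauchy–Schwarz with
`2ab ≤ a² + b²` the `kᵀP` cross term, and the remaining indefinite couplings between `x̃`,
`μ̃`, `z̃` are absorbed by the square `½‖x̃ - 2μ̃ - z̃‖² ≥ 0`.
-/

section InnerProductSpace

variable {E F : Type*} [NormedAddCommGroup E] [InnerProductSpace ℝ E]
  [NormedAddCommGroup F] [InnerProductSpace ℝ F]

theorem neg_two_mul_inner_apply_le (T : E →L[ℝ] F) (x : E) (y : F) :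
    -2 * ⟪y, T x⟫ ≤ ‖T‖ * (‖x‖ ^ 2 + ‖y‖ ^ 2) := by
  have hCS : |⟪y, T x⟫| ≤ ‖T‖ * (‖y‖ * ‖x‖) :=
    calc |⟪y, T x⟫| ≤ ‖y‖ * ‖T x‖ := abs_real_inner_le_norm _ _
      _ ≤ ‖y‖ * (‖T‖ * ‖x‖) := by gcongr; exact T.le_opNorm x
      _ = ‖T‖ * (‖y‖ * ‖x‖) := by ring
  have hAMGM : 2 * (‖y‖ * ‖x‖) ≤ ‖x‖ ^ 2 + ‖y‖ ^ 2 := by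
    nlinarith [sq_nonneg (‖x‖ - ‖y‖)]
  nlinarith [neg_abs_le ⟪y, T x⟫, norm_nonneg T]

theorem inner_sub_add_inner_add_sub_le (x μ z : E) :
    ⟪μ, x - z⟫ + ⟪μ + z, x - z⟫ ≤ 1 / 2 * ‖x‖ ^ 2 + 2 * ‖μ‖ ^ 2 - 1 / 2 * ‖z‖ ^ 2 := by
  have hsq : 0 ≤ ‖x - (2 : ℝ) • μ - z‖ ^ 2 := sq_nonneg _
  rw [← real_inner_self_eq_norm_sq] at hsq
  simp only [inner_sub_left, inner_sub_right, inner_add_left, real_inner_smul_left,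
    real_inner_smul_right, real_inner_self_eq_norm_sq, norm_smul, Real.norm_ofNat, mul_pow]
    at hsq ⊢
  linarith [real_inner_comm x μ, real_inner_comm x z, real_inner_comm μ z]

end InnerProductSpace

theorem lyapunov_estimate_thm2_general {N : ℕ}
    (α lam₂ qlow : ℝ) (hα : 0 < α)
    (A P Q k L : Matrix (Fin N) (Fin N) ℝ)
    (hlyap : Aᵀ * P + P * A = -Q)
    (hQ : ∀ v : EuclideanSpace ℝ (Fin N),
      qlow * ‖v‖ ^ 2 ≤ ⟪v, Matrix.toEuclideanCLM (𝕜 := ℝ) Q v⟫)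
    (c : ℝ) (hc : c = ‖Matrix.toEuclideanCLM (𝕜 := ℝ) (kᵀ * P)‖)
    (hL : ∀ v : EuclideanSpace ℝ (Fin N),
      lam₂ * ‖v‖ ^ 2 ≤ ⟪v, Matrix.toEuclideanCLM (𝕜 := ℝ) L v⟫) :
    ∀ xv muv zv nv : EuclideanSpace ℝ (Fin N),
      ⟪xv, Matrix.toEuclideanCLM (𝕜 := ℝ) (Aᵀ * P + P * A) xv⟫
          - 2 * ⟪muv, Matrix.toEuclideanCLM (𝕜 := ℝ) (kᵀ * P) xv⟫
          + ⟪muv, xv - α • Matrix.toEuclideanCLM (𝕜 := ℝ) L muv - zv⟫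
          + ⟪muv + zv, xv - zv⟫ - ‖nv‖ ^ 2 ≤
        -(qlow - 1 / 2 - c) * ‖xv‖ ^ 2 - (α * lam₂ - 2 - c) * ‖muv‖ ^ 2
          - (1 / 2) * ‖zv‖ ^ 2 - ‖nv‖ ^ 2 := by
  intro xv muv zv nv
  have hlyapx : ⟪xv, Matrix.toEuclideanCLM (𝕜 := ℝ) (Aᵀ * P + P * A) xv⟫
      = -⟪xv, Matrix.toEuclideanCLM (𝕜 := ℝ) Q xv⟫ := by
    rw [hlyap, map_neg, neg_apply, inner_neg_right]
  have hcross := neg_two_mul_inner_apply_le (Matrix.toEuclideanCLM (𝕜 := ℝ) (kᵀ * P)) xv muv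
  have hconsensus := mul_le_mul_of_nonneg_left (hL muv) hα.le
  have hcoupling := inner_sub_add_inner_add_sub_le xv muv zv
  rw [sub_right_comm, inner_sub_right, real_inner_smul_right]
  rw [← hc] at hcross
  linarith [hQ xv]

/-- The Lyapunov-derivative estimate in the proof of Theorem 2 for general quadratic
cost functions (lam₂ = λ₂, qlow = q̲ = λ_min(Q); `c = ‖kᵀP‖` is the spectral
(ℓ²-operator) norm of `kᵀP`; xv = x̃, muv = μ̃, zv = z̃, nv = ñ; `ATPPA`, `kTPx`,
`Qx`, `Lmu` are the Euclidean-space representatives of `(AᵀP+PA)x̃`, `(kᵀP)x̃`,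
`Qx̃` and `Lμ̃`). -/
theorem lyapunov_estimate_thm2 {N : ℕ} (hN : 1 ≤ N)
    (α lam₂ qlow : ℝ) (hα : 0 < α) (hlam₂ : 0 < lam₂) (hq : 0 < qlow)
    (A P Q k L : Matrix (Fin N) (Fin N) ℝ)
    (hPsymm : P.IsSymm) (hQsymm : Q.IsSymm) (hLsymm : L.IsSymm)
    (hlyap : Aᵀ * P + P * A = -Q)
    (hQ : ∀ v : EuclideanSpace ℝ (Fin N),
      qlow * ‖v‖ ^ 2 ≤ ⟪v, Matrix.toEuclideanCLM (𝕜 := ℝ) Q v⟫)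
    (c : ℝ) (hc : c = ‖Matrix.toEuclideanCLM (𝕜 := ℝ) (kᵀ * P)‖)
    (hL : ∀ v : EuclideanSpace ℝ (Fin N),
      lam₂ * ‖v‖ ^ 2 ≤ ⟪v, Matrix.toEuclideanCLM (𝕜 := ℝ) L v⟫) :
    ∀ xv muv zv nv : EuclideanSpace ℝ (Fin N),
      ⟪xv, Matrix.toEuclideanCLM (𝕜 := ℝ) (Aᵀ * P + P * A) xv⟫
          - 2 * ⟪muv, Matrix.toEuclideanCLM (𝕜 := ℝ) (kᵀ * P) xv⟫
          + ⟪muv, xv - α • Matrix.toEuclideanCLM (𝕜 := ℝ) L muv - zv⟫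
          + ⟪muv + zv, xv - zv⟫ - ‖nv‖ ^ 2 ≤
        -(qlow - 1 / 2 - c) * ‖xv‖ ^ 2 - (α * lam₂ - 2 - c) * ‖muv‖ ^ 2
          - (1 / 2) * ‖zv‖ ^ 2 - ‖nv‖ ^ 2 :=
  lyapunov_estimate_thm2_general α lam₂ qlow hα A P Q k L hlyap hQ c hc hL
end

section
/- Let L ∈ ℝ^{N×N} be symmetric with kernel exactly the span of the all-ones vector 𝟏_N (i.e., Lv = 0 if and only if v is a scalar multiple of 𝟏_N), let K ∈ ℝ^{N×N} be diagonal with strictly positive diagonal entries, let α ≠ 0, let F : ℝ^N → ℝ^N, and let d ∈ ℝ^N. Suppose (x̂, μ, z) ∈ ℝ^N × ℝ^N × ℝ^N satisfies K(F(x̂) + μ) = 0, x̂ − d − αLμ − z = 0, αLμ = 0, and Σ_{i=1}^N z_i = 0. Then there exists μ̄ ∈ ℝ such that μ = μ̄·𝟏_N, F(x̂) + μ̄·𝟏_N = 0, and Σ_{i=1}^N x̂_i = Σ_{i=1}^N d_i. -/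
namespace Matrix

theorem diagonal_mulVec_eq_zero_iff {n R : Type*} [Fintype n] [DecidableEq n]
    [Semiring R] [NoZeroDivisors R] {d : n → R} (hd : ∀ i, d i ≠ 0) {v : n → R} :
    diagonal d *ᵥ v = 0 ↔ v = 0 := by
  simp only [funext_iff, mulVec_diagonal, Pi.zero_apply, mul_eq_zero, hd, false_or]

end Matrix

theorem averaged_equilibrium_is_KKT_general {N : ℕ}
    (L : Matrix (Fin N) (Fin N) ℝ)
    (hker : ∀ v : Fin N → ℝ, L.mulVec v = 0 ↔ ∃ c : ℝ, v = fun _ => c)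
    (K : Matrix (Fin N) (Fin N) ℝ) (Kd : Fin N → ℝ) (hKd : ∀ i, 0 < Kd i)
    (hK : K = Matrix.diagonal Kd)
    (α : ℝ) (hα : α ≠ 0)
    (F : (Fin N → ℝ) → Fin N → ℝ) (d : Fin N → ℝ)
    (xhat μ z : Fin N → ℝ)
    (h1 : K.mulVec (F xhat + μ) = 0)
    (h2 : xhat - d - α • L.mulVec μ - z = 0)
    (h3 : α • L.mulVec μ = 0)
    (h4 : ∑ i, z i = 0) :
    ∃ μbar : ℝ, μ = (fun _ => μbar) ∧ (∀ i, F xhat i + μbar = 0) ∧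
      ∑ i, xhat i = ∑ i, d i := by
  obtain ⟨μbar, rfl⟩ := (hker μ).mp ((smul_eq_zero.mp h3).resolve_left hα)
  have hstationary : F xhat + (fun _ => μbar) = 0 := by
    rw [hK] at h1
    exact (Matrix.diagonal_mulVec_eq_zero_iff fun i => (hKd i).ne').mp h1
  have hx : xhat = z + d := by
    rw [h3, sub_zero, sub_eq_zero] at h2
    exact eq_add_of_sub_eq h2
  refine ⟨μbar, rfl, fun i => congrFun hstationary i, ?_⟩
  simp only [hx, Pi.add_apply, Finset.sum_add_distrib, h4, zero_add]

/-- Equilibria of the averaged closed-loop dynamics (equation (8)) with `∑ᵢ zᵢ = 0`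
satisfy the KKT conditions of Lemma 2: `μ` is a consensus vector `μ̄·𝟏`,
`F(x̂) + μ̄·𝟏 = 0`, and `∑ᵢ x̂ᵢ = ∑ᵢ dᵢ`. -/
theorem averaged_equilibrium_is_KKT {N : ℕ}
    (L : Matrix (Fin N) (Fin N) ℝ) (hLsymm : L.IsSymm)
    (hker : ∀ v : Fin N → ℝ, L.mulVec v = 0 ↔ ∃ c : ℝ, v = fun _ => c)
    (K : Matrix (Fin N) (Fin N) ℝ) (Kd : Fin N → ℝ) (hKd : ∀ i, 0 < Kd i)
    (hK : K = Matrix.diagonal Kd)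
    (α : ℝ) (hα : α ≠ 0)
    (F : (Fin N → ℝ) → Fin N → ℝ) (d : Fin N → ℝ)
    (xhat μ z : Fin N → ℝ)
    (h1 : K.mulVec (F xhat + μ) = 0)
    (h2 : xhat - d - α • L.mulVec μ - z = 0)
    (h3 : α • L.mulVec μ = 0)
    (h4 : ∑ i, z i = 0) :
    ∃ μbar : ℝ, μ = (fun _ => μbar) ∧ (∀ i, F xhat i + μbar = 0) ∧
      ∑ i, xhat i = ∑ i, d i :=
  averaged_equilibrium_is_KKT_general L hker K Kd hKd hK α hα F d xhat μ z h1 h2 h3 h4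
end
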